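/- For every real α with 0 < α < 1/2 and every ε > 0, there exists C such that for all integers c ≥ C and all integers k with αc < k < (1−α)c, one has |p_{k,c} − sin²((4k − 1)π / (8c + 4))| < ε. (In short: p_{k,c} = sin²((4k−1)π/(8c+4)) + o(1) as c → ∞, uniformly over k in the range αc < k < (1−α)c; this is the refined approximation underlying the discrete arcsine distributions.) -/

import Mathlib

open Real

/-- The `c`-th Legendre polynomial, `P_c(x) = (1/(2^c c!)) (d/dx)^c (x² − 1)^c`,
viewed as a real function. -/
noncomputable def legendreP (c : ℕ) (t : ℝ) : ℝ :=
  (1 / (2 ^ c * (Nat.factorial c : ℝ))) *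
    iteratedDeriv c (fun s : ℝ => (s ^ 2 - 1) ^ c) t

/-- `x : ℕ → ℕ → ℝ` enumerates, for each `c ≥ 1`, the roots of the `c`-th Legendre
polynomial in `(−1, 1)` in increasing order: `x k c` is the `k`-th root
`x_{k,c}` (for `1 ≤ k ≤ c`), these are roots lying in `(−1,1)`, they are strictly
increasing in `k`, and every root of `P_c` in `(−1,1)` occurs among them. -/
def IsLegendreRootSystem (x : ℕ → ℕ → ℝ) : Prop :=
  ∀ c : ℕ, 1 ≤ c →
    (∀ k : ℕ, 1 ≤ k → k ≤ c → x k c ∈ Set.Ioo (-1 : ℝ) 1 ∧ legendreP c (x k c) = 0) ∧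
    (∀ k l : ℕ, 1 ≤ k → k < l → l ≤ c → x k c < x l c) ∧
    (∀ t ∈ Set.Ioo (-1 : ℝ) 1, legendreP c t = 0 → ∃ k : ℕ, 1 ≤ k ∧ k ≤ c ∧ x k c = t)

/-- The weight `w_{k,c} = 2 / ((1 − x_{k,c}²)^{3/2} · P_c′(x_{k,c})²)`. -/
noncomputable def wLeg (x : ℕ → ℕ → ℝ) (k c : ℕ) : ℝ :=
  2 / ((1 - x k c ^ 2) ^ ((3 : ℝ) / 2) * (deriv (legendreP c) (x k c)) ^ 2)

/-- The normalizing constant `N_c = Σ_{k=1}^c w_{k,c}`. -/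
noncomputable def NLeg (x : ℕ → ℕ → ℝ) (c : ℕ) : ℝ :=
  ∑ k ∈ Finset.Icc 1 c, wLeg x k c

/-! The substitution `u(θ) = √(sin θ) P_c(cos θ)` turns Legendre's equation into
`u'' + ((c + 1/2)² + 1/(4 sin² θ)) u = 0`. As the coefficient exceeds `(c + 1/2)²`, Sturm
comparison with `sin ((c + 1/2)(θ - a))` puts a zero of `u` in every closed subinterval of
`(0, π)` of length `π/(c + 1/2)`. The zeros of `u` are the angles `θ_k = arccos x_{k,c}`, so
consecutive angles, and the extreme ones and the endpoints `0`, `π`, are at most `π/(c + 1/2)`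
apart; counting from both ends pins `θ_k` to within `π/(4c + 2)` of `π - (k - 1/4)π/(c + 1/2)`.
Since `p_{k,c} = (1 + cos θ_k)/2` and
`sin²((4k - 1)π/(8c + 4)) = (1 + cos (π - (k - 1/4)π/(c + 1/2)))/2`,
the two differ by at most `π/(8c + 4)`, uniformly in `k`. -/

open Set Polynomial

noncomputable def legendrePoly (c : ℕ) : ℝ[X] :=
  C (1 / (2 ^ c * (c.factorial : ℝ))) * derivative^[c] ((X ^ 2 - 1) ^ c)

theorem iteratedDeriv_polynomial_eval (p : ℝ[X]) (n : ℕ) :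
    iteratedDeriv n (fun t => p.eval t) = fun t => (derivative^[n] p).eval t := by
  induction n generalizing p with
  | zero => simp
  | succ n ih =>
    rw [iteratedDeriv_succ', funext fun t => Polynomial.deriv p (x := t), ih,
      Function.iterate_succ_apply]

theorem legendreP_eq_eval (c : ℕ) (t : ℝ) : legendreP c t = (legendrePoly c).eval t := by
  have h : (fun s : ℝ => (s ^ 2 - 1) ^ c) = fun s => (((X : ℝ[X]) ^ 2 - 1) ^ c).eval s := by
    simp
  simp [legendreP, legendrePoly, h, iteratedDeriv_polynomial_eval]

theorem one_sub_X_sq_mul_derivative_derivative_legendrePoly (c : ℕ) :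
    (1 - X ^ 2) * derivative^[2] (legendrePoly c) =
      2 * X * derivative (legendrePoly c) - C ((c : ℝ) * (c + 1)) * legendrePoly c := by
  set y : ℝ[X] := (X ^ 2 - 1) ^ c with hy_def
  have hd : derivative ((X : ℝ[X]) ^ 2 - 1) = C 2 * X := by
    rw [derivative_sub, derivative_X_sq, derivative_one, sub_zero]
  have h1 : derivative y * (X ^ 2 - 1) = C (2 * (c : ℝ)) * X * y := by
    rcases c with _ | c
    · simp [y]
    · rw [derivative_pow, hd, Nat.add_sub_cancel, map_mul, hy_def, pow_succ _ c]
      push_cast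
      ring
  -- differentiating `h1` once and then `c` times (Leibniz) gives Legendre's equation
  have hy : derivative^[2] y * X ^ 2 - derivative^[2] y =
      C (2 * (c : ℝ) - 2) * (derivative y * X) + C (2 * (c : ℝ)) * y := by
    have h2 := congr_arg derivative h1
    rw [derivative_mul, hd, derivative_mul, derivative_mul, derivative_C, derivative_X] at h2
    simp only [Function.iterate_succ, Function.iterate_zero, Function.comp_apply, id, map_sub]
    linear_combination h2
  have hcc : ((c * (c - 1) : ℕ) : ℝ[X]) = (c : ℝ[X]) * (c - 1) := by
    rcases c with _ | c <;> simp
  have h := congr_arg derivative^[c] hy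
  simp only [iterate_map_sub, iterate_map_add, iterate_derivative_C_mul,
    iterate_derivative_derivative_mul_X_sq, iterate_derivative_derivative_mul_X,
    ← Function.iterate_add_apply, nsmul_eq_mul, hcc] at h
  rw [legendrePoly, derivative_C_mul, iterate_derivative_C_mul,
    ← Function.iterate_succ_apply' derivative, ← Function.iterate_add_apply, add_comm 2 c]
  simp only [map_sub, map_mul, map_ofNat, map_natCast, map_add, map_one] at h ⊢
  push_cast at h ⊢
  linear_combination (-C (1 / (2 ^ c * (c.factorial : ℝ)))) * h

section Liouville

variable (p : ℝ[X])

noncomputable def liouvilleForm (θ : ℝ) : ℝ := √(sin θ) * p.eval (cos θ)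

noncomputable def liouvilleFormDeriv (θ : ℝ) : ℝ :=
  cos θ * p.eval (cos θ) / (2 * √(sin θ)) - √(sin θ) * (sin θ * (derivative p).eval (cos θ))

variable {p} {θ : ℝ}

theorem hasDerivAt_sqrt_sin (hθ : 0 < sin θ) :
    HasDerivAt (fun t => √(sin t)) (cos θ / (2 * √(sin θ))) θ :=
  (hasDerivAt_sin θ).sqrt hθ.ne'

theorem hasDerivAt_eval_cos (q : ℝ[X]) :
    HasDerivAt (fun t => q.eval (cos t)) (-(sin θ * (derivative q).eval (cos θ))) θ :=
  ((q.hasDerivAt (cos θ)).comp θ (hasDerivAt_cos θ)).congr_deriv (by ring)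

theorem hasDerivAt_liouvilleForm (hθ : 0 < sin θ) :
    HasDerivAt (liouvilleForm p) (liouvilleFormDeriv p θ) θ :=
  ((hasDerivAt_sqrt_sin hθ).mul (hasDerivAt_eval_cos p)).congr_deriv
    (by simp only [liouvilleFormDeriv]; ring)

theorem hasDerivAt_liouvilleFormDeriv {ν : ℝ}
    (hp : (1 - X ^ 2) * derivative^[2] p = 2 * X * derivative p - C (ν * (ν + 1)) * p)
    (hθ : 0 < sin θ) :
    HasDerivAt (liouvilleFormDeriv p)
      (-(((ν + 1 / 2) ^ 2 + 1 / (4 * sin θ ^ 2)) * liouvilleForm p θ)) θ := by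
  have hode := congr_arg (eval (cos θ)) hp
  simp only [eval_mul, eval_sub, eval_one, eval_pow, eval_X, eval_C, eval_ofNat,
    Function.iterate_succ, Function.iterate_zero, Function.comp_apply, id] at hode
  have hr : 0 < √(sin θ) := sqrt_pos.2 hθ
  have hr2 : √(sin θ) ^ 2 = sin θ := sq_sqrt hθ.le
  have h := ((((hasDerivAt_cos θ).mul (hasDerivAt_eval_cos p)).div
    ((hasDerivAt_sqrt_sin hθ).const_mul 2) (by positivity)).sub
    ((hasDerivAt_sqrt_sin hθ).mul ((hasDerivAt_sin θ).mul (hasDerivAt_eval_cos (derivative p)))))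
  refine h.congr_deriv ?_
  simp only [liouvilleForm, Pi.mul_apply]
  set r := √(sin θ)
  have hpyth : r ^ 2 * r ^ 2 + cos θ ^ 2 = 1 := by rw [hr2, ← sq, sin_sq_add_cos_sq]
  rw [← hr2]
  field_simp
  linear_combination 16 * r ^ 4 * hode + (16 * r ^ 4 * eval (cos θ) (derivative (derivative p))
    - 4 * eval (cos θ) p) * hpyth

end Liouville

theorem IsPreconnected.forall_pos_of_forall_ne_zero {X : Type*} [TopologicalSpace X] {s : Set X}
    (hs : IsPreconnected s) {f : X → ℝ} (hf : ContinuousOn f s) (hne : ∀ x ∈ s, f x ≠ 0)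
    {a : X} (ha : a ∈ s) (hfa : 0 < f a) : ∀ x ∈ s, 0 < f x := by
  intro x hx
  by_contra! hfx
  obtain ⟨z, hz, hz0⟩ := hs.intermediate_value hx ha hf ⟨hfx, hfa.le⟩
  exact hne z hz hz0

section Sturm

variable {u A Q : ℝ → ℝ} {a N : ℝ}

theorem sturm_not_forall_pos (hN : 0 < N)
    (hu : ∀ θ ∈ Icc a (a + π / N), HasDerivAt u (A θ) θ)
    (hA : ∀ θ ∈ Icc a (a + π / N), HasDerivAt A (-(Q θ * u θ)) θ)
    (hQ : ∀ θ ∈ Icc a (a + π / N), N ^ 2 ≤ Q θ) :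
    ¬ ∀ θ ∈ Icc a (a + π / N), 0 < u θ := by
  intro hpos
  set b := a + π / N
  have hab : a ≤ b := by simp only [b]; linarith [div_pos pi_pos hN]
  -- the Wronskian of `u` and the comparison solution `sin (N (θ - a))`
  let W θ := u θ * (N * cos (N * (θ - a))) - A θ * sin (N * (θ - a))
  have hW : ∀ θ ∈ Icc a b, HasDerivAt W ((Q θ - N ^ 2) * u θ * sin (N * (θ - a))) θ := by
    intro θ hθ
    have hlin : HasDerivAt (fun t => N * (t - a)) N θ := by
      simpa using ((hasDerivAt_id θ).sub_const a).const_mul N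
    refine (((hu θ hθ).mul (hlin.cos.const_mul N)).sub ((hA θ hθ).mul hlin.sin)).congr_deriv ?_
    ring
  have hmono : MonotoneOn W (Icc a b) := by
    refine monotoneOn_of_hasDerivWithinAt_nonneg (convex_Icc a b)
      (fun θ hθ => (hW θ hθ).continuousAt.continuousWithinAt)
      (fun θ hθ => (hW θ (interior_subset hθ)).hasDerivWithinAt) fun θ hθ => ?_
    rw [interior_Icc] at hθ
    have hsin : 0 ≤ sin (N * (θ - a)) := by
      apply sin_nonneg_of_nonneg_of_le_pi (by nlinarith [hθ.1])
      calc N * (θ - a) ≤ N * (π / N) := by gcongr; linarith [hθ.2]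
        _ = π := by field_simp
    have := hQ θ (Ioo_subset_Icc_self hθ)
    have := hpos θ (Ioo_subset_Icc_self hθ)
    positivity
  have hWab := hmono (left_mem_Icc.2 hab) (right_mem_Icc.2 hab) hab
  have hNb : N * (b - a) = π := by simp only [b]; field_simp; ring
  simp only [W, sub_self, mul_zero, cos_zero, sin_zero, hNb, cos_pi, sin_pi] at hWab
  nlinarith [hpos a (left_mem_Icc.2 hab), hpos b (right_mem_Icc.2 hab)]

theorem exists_eq_zero_of_sturm_comparison (hN : 0 < N)
    (hu : ∀ θ ∈ Icc a (a + π / N), HasDerivAt u (A θ) θ)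
    (hA : ∀ θ ∈ Icc a (a + π / N), HasDerivAt A (-(Q θ * u θ)) θ)
    (hQ : ∀ θ ∈ Icc a (a + π / N), N ^ 2 ≤ Q θ) :
    ∃ θ ∈ Icc a (a + π / N), u θ = 0 := by
  by_contra! hne
  have ha : a ∈ Icc a (a + π / N) := left_mem_Icc.2 (by linarith [div_pos pi_pos hN])
  wlog hua : 0 < u a generalizing u A
  · refine this (u := -u) (A := -A) (fun θ hθ => (hu θ hθ).neg) (fun θ hθ => ?_)
      (fun θ hθ => neg_ne_zero.2 (hne θ hθ)) ?_
    · simpa using (hA θ hθ).neg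
    · simpa using (hne a ha).lt_of_le (not_lt.1 hua)
  refine sturm_not_forall_pos hN hu hA hQ (isPreconnected_Icc.forall_pos_of_forall_ne_zero
    (fun θ hθ => (hu θ hθ).continuousAt.continuousWithinAt) hne ha hua)

end Sturm

theorem sub_le_of_forall_liouvilleForm_ne_zero {p : ℝ[X]} {ν a b : ℝ} (hν : 0 < ν + 1 / 2)
    (hp : (1 - X ^ 2) * derivative^[2] p = 2 * X * derivative p - C (ν * (ν + 1)) * p)
    (ha : 0 ≤ a) (hb : b ≤ π) (hne : ∀ θ ∈ Ioo a b, liouvilleForm p θ ≠ 0) :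
    b - a ≤ π / (ν + 1 / 2) := by
  set N := ν + 1 / 2
  by_contra! hlt
  set a' := (a + b - π / N) / 2 with ha'
  have hsub : Icc a' (a' + π / N) ⊆ Ioo a b := fun θ hθ =>
    ⟨by linarith [hθ.1], by linarith [hθ.2]⟩
  have hsin : ∀ θ ∈ Icc a' (a' + π / N), 0 < sin θ := fun θ hθ =>
    sin_pos_of_pos_of_lt_pi (by linarith [(hsub hθ).1]) (by linarith [(hsub hθ).2])
  obtain ⟨θ, hθ, hθ0⟩ := exists_eq_zero_of_sturm_comparison hν
    (fun θ hθ => hasDerivAt_liouvilleForm (hsin θ hθ))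
    (fun θ hθ => hasDerivAt_liouvilleFormDeriv hp (hsin θ hθ))
    (fun θ hθ => le_add_of_nonneg_right (by have := hsin θ hθ; positivity))
  exact hne θ (hsub hθ) hθ0

/-- Padding the roots with `x_0 = -1` and `x_{c+1} = 1` turns the distances from the extreme
angles to the endpoints `π` and `0` into ordinary gaps between consecutive angles. -/
def extendedRoot (x : ℕ → ℕ → ℝ) (c k : ℕ) : ℝ :=
  if k = 0 then -1 else if k ≤ c then x k c else 1

noncomputable def rootAngle (x : ℕ → ℕ → ℝ) (c k : ℕ) : ℝ := arccos (extendedRoot x c k)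

theorem extendedRoot_of_mem {x : ℕ → ℕ → ℝ} {c k : ℕ} (hk : 1 ≤ k) (hkc : k ≤ c) :
    extendedRoot x c k = x k c := by
  simp [extendedRoot, hkc, Nat.one_le_iff_ne_zero.1 hk]

theorem sub_le_mul_of_forall_sub_succ_le {f : ℕ → ℝ} {n : ℕ} {d : ℝ}
    (h : ∀ k < n, f k - f (k + 1) ≤ d) {i j : ℕ} (hij : i ≤ j) (hj : j ≤ n) :
    f i - f j ≤ ((j : ℝ) - i) * d := by
  induction j, hij using Nat.le_induction with
  | base => simp
  | succ j hij ih =>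
    have := h j (by omega)
    have := ih (by omega)
    push_cast
    linarith

section RootAngle

variable {x : ℕ → ℕ → ℝ} (hx : IsLegendreRootSystem x) {c : ℕ} (hc : 1 ≤ c)
include hx hc

theorem extendedRoot_strictMonoOn : StrictMonoOn (extendedRoot x c) (Iic (c + 1)) := by
  intro i hi j hj hij
  simp only [mem_Iic] at hi hj
  have hroot k (hk : 1 ≤ k) (hkc : k ≤ c) := ((hx c hc).1 k hk hkc).1
  rcases Nat.eq_zero_or_pos i with rfl | hi0
  · have hx0 : extendedRoot x c 0 = -1 := rfl
    rcases hj.lt_or_eq with hj | rfl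
    · rw [hx0, extendedRoot_of_mem hij (by omega)]
      exact (hroot j hij (by omega)).1
    · simp [extendedRoot]
  · rw [extendedRoot_of_mem hi0 (by omega)]
    rcases hj.lt_or_eq with hj | rfl
    · rw [extendedRoot_of_mem (by omega) (by omega)]
      exact (hx c hc).2.1 i j hi0 hij (by omega)
    · simpa [extendedRoot] using (hroot i hi0 (by omega)).2

theorem rootAngle_strictAntiOn : StrictAntiOn (rootAngle x c) (Iic (c + 1)) := by
  have hmono := extendedRoot_strictMonoOn hx hc
  have hmem : ∀ k ∈ Iic (c + 1), extendedRoot x c k ∈ Icc (-1) 1 := fun k hk => by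
    have h0 := hmono.monotoneOn (by simp) hk (Nat.zero_le k)
    have h1 := hmono.monotoneOn hk (by simp) hk
    simp_all [extendedRoot]
  exact fun i hi j hj hij => strictAntiOn_arccos (hmem i hi) (hmem j hj) (hmono hi hj hij)

theorem exists_rootAngle_eq_of_liouvilleForm_eq_zero {θ : ℝ} (hθ : θ ∈ Ioo 0 π)
    (h0 : liouvilleForm (legendrePoly c) θ = 0) :
    ∃ k, 1 ≤ k ∧ k ≤ c ∧ rootAngle x c k = θ := by
  have hsin := sin_pos_of_pos_of_lt_pi hθ.1 hθ.2
  have hP : legendreP c (cos θ) = 0 := by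
    rw [legendreP_eq_eval]
    simpa [liouvilleForm, (sqrt_pos.2 hsin).ne'] using h0
  have hθ' : arccos (cos θ) = θ := arccos_cos hθ.1.le hθ.2.le
  have hcos : cos θ ∈ Ioo (-1) 1 :=
    ⟨arccos_lt_pi.1 (hθ'.symm ▸ hθ.2), arccos_pos.1 (hθ'.symm ▸ hθ.1)⟩
  obtain ⟨k, hk, hkc, hxk⟩ := (hx c hc).2.2 (cos θ) hcos hP
  exact ⟨k, hk, hkc, by rw [rootAngle, extendedRoot_of_mem hk hkc, hxk, hθ']⟩

theorem rootAngle_sub_rootAngle_succ_le {k : ℕ} (hk : k ≤ c) :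
    rootAngle x c k - rootAngle x c (k + 1) ≤ π / (c + 1 / 2) := by
  have hanti := rootAngle_strictAntiOn hx hc
  refine sub_le_of_forall_liouvilleForm_ne_zero (by positivity)
    (one_sub_X_sq_mul_derivative_derivative_legendrePoly c) (arccos_nonneg _) (arccos_le_pi _)
    fun θ hθ h0 => ?_
  have hθπ : θ ∈ Ioo 0 π :=
    ⟨(arccos_nonneg _).trans_lt hθ.1, hθ.2.trans_le (arccos_le_pi _)⟩
  obtain ⟨i, hi, hic, rfl⟩ := exists_rootAngle_eq_of_liouvilleForm_eq_zero hx hc hθπ h0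
  have hlt := (hanti.lt_iff_gt (a := k + 1) (b := i) (by simp; omega) (by simp; omega)).1 hθ.1
  have hgt := (hanti.lt_iff_gt (a := i) (b := k) (by simp; omega) (by simp; omega)).1 hθ.2
  omega

theorem abs_rootAngle_sub_le {k : ℕ} (hkc : k ≤ c) :
    |rootAngle x c k - (π - (k - 1 / 4) * (π / (c + 1 / 2)))| ≤ π / (c + 1 / 2) / 4 := by
  have hgap j (hj : j < c + 1) := rootAngle_sub_rootAngle_succ_le hx hc (Nat.lt_succ_iff.1 hj)
  have hlow := sub_le_mul_of_forall_sub_succ_le hgap (Nat.zero_le k) (by omega)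
  have hup := sub_le_mul_of_forall_sub_succ_le hgap (i := k) (j := c + 1) (by omega) le_rfl
  have h0 : rootAngle x c 0 = π := by simp [rootAngle, extendedRoot, arccos_neg_one]
  have h1 : rootAngle x c (c + 1) = 0 := by simp [rootAngle, extendedRoot, arccos_one]
  have hd : ((c : ℝ) + 1 / 2) * (π / (c + 1 / 2)) = π := by field_simp
  rw [h0] at hlow
  rw [h1] at hup
  push_cast at hlow hup
  rw [abs_le]
  constructor <;> nlinarith

end RootAngle

theorem abs_legendreRoot_sub_sin_sq_le {x : ℕ → ℕ → ℝ} (hx : IsLegendreRootSystem x) {c k : ℕ}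
    (hk : 1 ≤ k) (hkc : k ≤ c) :
    |(x k c + 1) / 2 - sin ((4 * k - 1) * π / (8 * c + 4)) ^ 2| ≤ π / (8 * c + 4) := by
  set d := π / (c + 1 / 2)
  have hroot := ((hx c (hk.trans hkc)).1 k hk hkc).1
  have hxk : x k c = cos (rootAngle x c k) := by
    rw [rootAngle, extendedRoot_of_mem hk hkc, cos_arccos hroot.1.le hroot.2.le]
  have hφ : 2 * ((4 * k - 1) * π / (8 * c + 4)) = (k - 1 / 4) * d := by
    simp only [d]; field_simp; ring
  have hsin : sin ((4 * k - 1) * π / (8 * c + 4)) ^ 2 = (1 + cos (π - (k - 1 / 4) * d)) / 2 := by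
    rw [sin_sq_eq_half_sub, hφ, cos_pi_sub]; ring
  calc |(x k c + 1) / 2 - sin ((4 * k - 1) * π / (8 * c + 4)) ^ 2|
      = |cos (rootAngle x c k) - cos (π - (k - 1 / 4) * d)| / 2 := by
        rw [hxk, hsin, ← sub_div, abs_div, abs_two]; ring_nf
    _ ≤ |rootAngle x c k - (π - (k - 1 / 4) * d)| / 2 :=
        div_le_div_of_nonneg_right (abs_cos_sub_cos_le _ _) two_pos.le
    _ ≤ d / 4 / 2 := by gcongr; exact abs_rootAngle_sub_le hx (hk.trans hkc) hkc
    _ = π / (8 * c + 4) := by simp only [d]; field_simp; ring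

theorem p_refined_asymptotics_general (x : ℕ → ℕ → ℝ) (hx : IsLegendreRootSystem x)
    (α : ℝ) (hα0 : 0 < α) (ε : ℝ) (hε : 0 < ε) :
    ∃ C : ℕ, ∀ c : ℕ, C ≤ c → ∀ k : ℕ,
      α * (c : ℝ) < (k : ℝ) → (k : ℝ) < (1 - α) * (c : ℝ) →
      |(x k c + 1) / 2 -
        Real.sin ((4 * (k : ℝ) - 1) * π / (8 * (c : ℝ) + 4)) ^ 2| < ε := by
  obtain ⟨C, hC⟩ := exists_nat_gt (π / ε)
  refine ⟨C, fun c hCc k hk₁ hk₂ => ?_⟩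
  have hαc : 0 ≤ α * c := by positivity
  have hk : 0 < k := Nat.cast_pos.1 (by linarith : (0 : ℝ) < k)
  have hkc : k ≤ c := Nat.cast_le.1 (by nlinarith : (k : ℝ) ≤ c)
  have hπ : π < ε * c := by
    have := hC.trans_le (Nat.cast_le.2 hCc)
    rwa [div_lt_iff₀ hε, mul_comm] at this
  refine (abs_legendreRoot_sub_sin_sq_le hx hk hkc).trans_lt ?_
  rw [div_lt_iff₀ (by positivity)]
  nlinarith

/-- Refined approximation: `p_{k,c} = sin²((4k−1)π/(8c+4)) + o(1)` as `c → ∞`,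
uniformly over `k` with `αc < k < (1−α)c`. -/
theorem p_refined_asymptotics (x : ℕ → ℕ → ℝ) (hx : IsLegendreRootSystem x)
    (α : ℝ) (hα0 : 0 < α) (hα1 : α < 1 / 2) (ε : ℝ) (hε : 0 < ε) :
    ∃ C : ℕ, ∀ c : ℕ, C ≤ c → ∀ k : ℕ,
      α * (c : ℝ) < (k : ℝ) → (k : ℝ) < (1 - α) * (c : ℝ) →
      |(x k c + 1) / 2 -
        Real.sin ((4 * (k : ℝ) - 1) * π / (8 * (c : ℝ) + 4)) ^ 2| < ε :=
  p_refined_asymptotics_general x hx α hα0 ε hε
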